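/- Let h : 𝒯 → 𝒜 be a homology theory that reflects isomorphisms and is full. Suppose given a morphism β : V → W in 𝒯, an object U of 𝒯, and a short exact sequence 0 → h(U) →α̂ h(V) →h(β) h(W) → 0 in 𝒜 whose second map is h(β). Then there exists a distinguished triangle U →α V →β W →γ U[1] in 𝒯 such that h(α) = α̂. -/

import Mathlib

open CategoryTheory Category Limits Pretriangulated

/-!
Complete `β` to a distinguished triangle `U' ⟶u V ⟶β W ⟶γ' U'⟦1⟧`. As `h(β)` is epi and
`β ≫ γ' = 0`, `h` kills `γ'`, hence also `γ'⟦-1⟧`, and the long exact sequence makes `h(u)` mono.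
So `h(u)` and `α̂` are both kernels of `h(β)`, and differ by an isomorphism `h(U') ≅ h(U)`. Since
`h` is full and reflects isomorphisms, this is `h` of an isomorphism `U' ≅ U`, along which the
triangle is transported.
-/

namespace CategoryTheory

lemma Functor.exists_iso_map_hom_eq {C D : Type*} [Category C] [Category D] (F : C ⥤ D)
    [F.Full] [F.ReflectsIsomorphisms] {X Y : C} (e : F.obj X ≅ F.obj Y) :
    ∃ f : X ≅ Y, F.map f.hom = e.hom := by
  have : IsIso (F.map (F.preimage e.hom)) := by rw [F.map_preimage]; infer_instance
  have : IsIso (F.preimage e.hom) := isIso_of_reflects_iso _ F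
  exact ⟨asIso (F.preimage e.hom), F.map_preimage e.hom⟩

lemma Functor.map_shift_map_eq_zero {C D : Type*} [Category C] [Category D] [Preadditive D]
    {M : Type*} [AddGroup M] [HasShift C M] [HasShift D M] (F : C ⥤ D) [F.CommShift M]
    {X Y : C} {f : X ⟶ Y} (hf : F.map f = 0) (a : M) : F.map (f⟦a⟧') = 0 := by
  rw [← cancel_mono ((F.commShiftIso a).hom.app Y), F.commShiftIso_hom_naturality, hf,
    Functor.map_zero, comp_zero, zero_comp]

lemma ShortComplex.Exact.exists_iso_comp_eq {C : Type*} [Category C] [Preadditive C]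
    [Balanced C] {X₁ X₂ Y Z : C} {f₁ : X₁ ⟶ Y} {f₂ : X₂ ⟶ Y} {g : Y ⟶ Z} {w₁ : f₁ ≫ g = 0}
    {w₂ : f₂ ≫ g = 0} (h₁ : (ShortComplex.mk f₁ g w₁).Exact)
    (h₂ : (ShortComplex.mk f₂ g w₂).Exact) [Mono f₁] [Mono f₂] :
    ∃ e : X₁ ≅ X₂, e.hom ≫ f₂ = f₁ :=
  ⟨IsLimit.conePointUniqueUpToIso h₁.fIsKernel h₂.fIsKernel,
    IsLimit.conePointUniqueUpToIso_hom_comp h₁.fIsKernel h₂.fIsKernel WalkingParallelPair.zero⟩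

section

variable {C : Type*} [Category C] [HasZeroObject C] [Preadditive C] [HasShift C ℤ]
  [∀ n : ℤ, (shiftFunctor C n).Additive] [Pretriangulated C]

lemma Pretriangulated.distinguished_mk_of_iso₁ {X₁ X₂ X₃ U : C} {f : X₁ ⟶ X₂} {g : X₂ ⟶ X₃}
    {h : X₃ ⟶ X₁⟦(1 : ℤ)⟧} (hT : Triangle.mk f g h ∈ distTriang C) (e : X₁ ≅ U) :
    Triangle.mk (e.inv ≫ f) g (h ≫ e.hom⟦(1 : ℤ)⟧') ∈ distTriang C := by
  refine isomorphic_distinguished _ hT _ (Triangle.isoMk _ _ e.symm (Iso.refl X₂) (Iso.refl X₃)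
    (comp_id _) ((comp_id g).trans (id_comp g).symm) ?_)
  change (h ≫ e.hom⟦(1 : ℤ)⟧') ≫ e.inv⟦(1 : ℤ)⟧' = 𝟙 X₃ ≫ h
  simp [← Functor.map_comp]

lemma Functor.mono_map_mor₁_of_epi_map_mor₂ {A : Type*} [Category A] [Abelian A]
    [HasShift A ℤ] (F : C ⥤ A) [F.Additive] [F.CommShift ℤ] [F.IsHomological]
    (T : Triangle C) (hT : T ∈ distTriang C) [Epi (F.map T.mor₂)] : Mono (F.map T.mor₁) := by
  have h₃ : F.map T.mor₃ = 0 := by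
    rw [← cancel_epi (F.map T.mor₂), ← F.map_comp, comp_distTriang_mor_zero₂₃ _ hT,
      F.map_zero, comp_zero]
  refine (F.map_distinguished_exact _ (inv_rot_of_distTriang _ hT)).mono_g_iff.2 ?_
  change F.map T.invRotate.mor₁ = 0
  -- `rw` fails here: the objects of `T.invRotate` unfold to the shifted ones only at default
  -- transparency.
  erw [F.map_neg, F.map_comp, F.map_shift_map_eq_zero h₃, zero_comp, neg_zero]

end

end CategoryTheory

/-- (Dual realization lemma.)  Let `h` be a homology theory that reflects
isomorphisms and is full.  Given `β : V ⟶ W`, an object `U`, and a short exact sequence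
`0 ⟶ h(U) ⟶α̂ h(V) ⟶h(β) h(W) ⟶ 0` in `𝒜` whose second map is `h(β)`, there is a
distinguished triangle `U ⟶α V ⟶β W ⟶γ U⟦1⟧` with `h(α) = α̂`. -/
theorem realization_lemma_dual
    {T : Type*} [Category T] [HasZeroObject T] [Preadditive T] [HasShift T ℤ]
    [∀ n : ℤ, (shiftFunctor T n).Additive] [Pretriangulated T]
    {A : Type*} [Category A] [Abelian A] [HasShift A ℤ]
    [∀ n : ℤ, (shiftFunctor A n).Additive]
    (h : T ⥤ A) [h.Additive] [h.CommShift ℤ] [h.IsHomological]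
    [h.ReflectsIsomorphisms] [h.Full]
    {V W : T} (β : V ⟶ W) (U : T) (αhat : h.obj U ⟶ h.obj V)
    (w : αhat ≫ h.map β = 0)
    (hS : (ShortComplex.mk αhat (h.map β) w).ShortExact) :
    ∃ (α : U ⟶ V) (γ : W ⟶ U⟦(1:ℤ)⟧),
      (Triangle.mk α β γ ∈ distTriang T) ∧ h.map α = αhat := by
  obtain ⟨U', u, γ', hT⟩ := distinguished_cocone_triangle₁ β
  have : Epi (h.map (Triangle.mk u β γ').mor₂) := hS.epi_g
  have : Mono (h.map u) := h.mono_map_mor₁_of_epi_map_mor₂ _ hT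
  have := hS.mono_f
  have hu : (ShortComplex.mk (h.map u) (h.map β) _).Exact := h.map_distinguished_exact _ hT
  obtain ⟨e, he⟩ := hu.exists_iso_comp_eq hS.exact
  obtain ⟨f, hf⟩ := h.exists_iso_map_hom_eq e
  refine ⟨f.inv ≫ u, γ' ≫ f.hom⟦(1 : ℤ)⟧', distinguished_mk_of_iso₁ hT f, ?_⟩
  rw [h.map_comp, ← he, ← hf, ← h.map_comp_assoc, f.inv_hom_id, h.map_id, id_comp]
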